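/- arXiv:2010.03185 — 7 statements merged into one kernel-verified Lean document; each statement's English description precedes it below -/
import Mathlib

section
/- For any Kripke structure K = (V,E,ℓ) with a total transition relation, any state x, and any QCTL formulas φ and ψ, the formula E φ U ψ holds at x iff the formula ∀z. (AG(z ↔ (ψ ∨ (φ ∧ EX z))) → z) holds at x, where z is a fresh atomic proposition not occurring in φ or ψ. -/
/-- An infinite path in a Kripke structure with transition relation `E`. -/
def IsPath {V : Type*} (E : V → V → Prop) (ρ : ℕ → V) : Prop := ∀ i, E (ρ i) (ρ (i + 1))

/-- `K, x ⊨ E φ U ψ` (structure semantics over infinite paths). -/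
def SatEU {V : Type*} (E : V → V → Prop) (φ ψ : V → Prop) (x : V) : Prop :=
  ∃ ρ : ℕ → V, IsPath E ρ ∧ ρ 0 = x ∧ ∃ i, ψ (ρ i) ∧ ∀ j < i, φ (ρ j)

/-- Lemma (fixpoint characterization of EU):
`E φ U ψ  ≡  ∀z. (AG(z ↔ (ψ ∨ (φ ∧ EX z))) → z)` under the structure semantics,
where the fresh proposition `z` is interpreted as an arbitrary labelling `Z : V → Prop`,
`AG θ` at `x` means `θ` holds at every state reachable from `x`, and `EX Z` at `y`
means some `E`-successor of `y` is labelled `Z`. -/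
theorem eu_eq_forall_fixpoint {V : Type*} [Fintype V] (E : V → V → Prop)
    (hE : ∀ v, ∃ w, E v w) (φ ψ : V → Prop) (x : V) :
    SatEU E φ ψ x ↔
      ∀ Z : V → Prop,
        (∀ y, Relation.ReflTransGen E x y →
          (Z y ↔ (ψ y ∨ (φ y ∧ ∃ y', E y y' ∧ Z y')))) → Z x := by
  have exists_path : ∀ y : V, ∃ ρ : ℕ → V, IsPath E ρ ∧ ρ 0 = y := by
    intro y
    refine ⟨fun n => (fun v => (hE v).choose)^[n] y, ?_, rfl⟩
    intro n
    simp only []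
    rw [Function.iterate_succ_apply']
    exact (hE _).choose_spec
  constructor
  · rintro ⟨ρ, hpath, h0, i, hψ, hφ⟩ Z hZ
    have hreach : ∀ n, Relation.ReflTransGen E x (ρ n) := by
      intro n
      induction n with
      | zero => rw [h0]
      | succ n ih => exact ih.tail (hpath n)
    have key : ∀ d, Z (ρ (i - d)) := by
      intro d
      induction d with
      | zero => exact (hZ _ (hreach i)).2 (Or.inl hψ)
      | succ d ih =>
        by_cases h : i ≤ d
        · have : i - (d + 1) = i - d := by omega
          rw [this]; exact ih
        · have hlt : i - (d + 1) < i := by omega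
          refine (hZ _ (hreach _)).2 (Or.inr ⟨hφ _ hlt, ρ (i - d), ?_, ?_⟩)
          · have : i - d = (i - (d + 1)) + 1 := by omega
            rw [this]; exact hpath _
          · exact ih
    have := key i
    simpa [h0] using this
  · intro h
    refine h (SatEU E φ ψ) fun y _ => ⟨?_, ?_⟩
    · rintro ⟨ρ, hpath, h0, i, hψ, hφ⟩
      rcases Nat.eq_zero_or_pos i with hi | hi
      · left; rw [← h0, ← hi]; exact hψ
      · right
        refine ⟨by rw [← h0]; exact hφ 0 hi, ρ 1, by rw [← h0]; exact hpath 0, ?_⟩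
        exact ⟨fun n => ρ (n + 1), fun n => hpath (n + 1), rfl, i - 1,
          by show ψ (ρ (i - 1 + 1))
             have : i - 1 + 1 = i := by omega
             rw [this]; exact hψ,
          fun j hj => hφ (j + 1) (by omega)⟩
    · rintro (hψy | ⟨hφy, y', hE', ρ, hpath, h0, i, hψ, hφ⟩)
      · obtain ⟨ρ, hpath, h0⟩ := exists_path y
        exact ⟨ρ, hpath, h0, 0, by rwa [h0], fun j hj => absurd hj (Nat.not_lt_zero j)⟩
      · refine ⟨fun n => Nat.rec y (fun k _ => ρ k) n, fun n => ?_, rfl, i + 1,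
          hψ, fun j hj => ?_⟩
        · cases n with
          | zero => simpa [h0] using hE'
          | succ n => exact hpath n
        · cases j with
          | zero => exact hφy
          | succ j => exact hφ j (by omega)
end

section
/- For any Kripke structure K = (V,E,ℓ) with a total transition relation, any state x, and any QCTL formulas φ and ψ, the formula A φ U ψ holds at x iff the formula ∀z. (AG(z ↔ (ψ ∨ (φ ∧ AX z))) → z) holds at x, where z is a fresh atomic proposition not occurring in φ or ψ. -/
/-- `K, x ⊨ A φ U ψ` (structure semantics over infinite paths). -/
def SatAU {V : Type*} (E : V → V → Prop) (φ ψ : V → Prop) (x : V) : Prop :=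
  ∀ ρ : ℕ → V, IsPath E ρ → ρ 0 = x → ∃ i, ψ (ρ i) ∧ ∀ j < i, φ (ρ j)

/-- Lemma (fixpoint characterization of AU):
`A φ U ψ  ≡  ∀z. (AG(z ↔ (ψ ∨ (φ ∧ AX z))) → z)` under the structure semantics,
where the fresh proposition `z` is interpreted as an arbitrary labelling `Z : V → Prop`. -/
theorem au_eq_forall_fixpoint {V : Type*} [Fintype V] (E : V → V → Prop)
    (hE : ∀ v, ∃ w, E v w) (φ ψ : V → Prop) (x : V) :
    SatAU E φ ψ x ↔
      ∀ Z : V → Prop,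
        (∀ y, Relation.ReflTransGen E x y →
          (Z y ↔ (ψ y ∨ (φ y ∧ ∀ y', E y y' → Z y')))) → Z x := by
  classical
  constructor
  · intro hAU Z hZ
    by_contra hZx
    set f : V → V := fun y => if h : ∃ w, E y w ∧ ¬ Z w then h.choose else (hE y).choose
      with hf
    have hfE : ∀ y, E y (f y) := by
      intro y
      by_cases h : ∃ w, E y w ∧ ¬ Z w
      · rw [hf]; simp only [dif_pos h]; exact h.choose_spec.1
      · rw [hf]; simp only [dif_neg h]; exact (hE y).choose_spec
    set ρ : ℕ → V := fun n => f^[n] x with hρ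
    have hρ0 : ρ 0 = x := rfl
    have hρs : ∀ n, ρ (n+1) = f (ρ n) := fun n => Function.iterate_succ_apply' f n x
    have hpath : IsPath E ρ := fun n => by rw [hρs]; exact hfE _
    obtain ⟨i, hψi, hφi⟩ := hAU ρ hpath hρ0
    have inv : ∀ n, n ≤ i → Relation.ReflTransGen E x (ρ n) ∧ ¬ Z (ρ n) := by
      intro n
      induction n with
      | zero => exact fun _ => ⟨Relation.ReflTransGen.refl, hZx⟩
      | succ n ih =>
        intro hn
        obtain ⟨hreach, hnz⟩ := ih (Nat.le_of_succ_le hn)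
        have hfix := hZ _ hreach
        have hnφψ : ¬ (ψ (ρ n) ∨ (φ (ρ n) ∧ ∀ y', E (ρ n) y' → Z y')) :=
          fun h => hnz (hfix.mpr h)
        push_neg at hnφψ
        have hφn : φ (ρ n) := hφi n (Nat.lt_of_succ_le hn)
        obtain ⟨y', hEy', hnZy'⟩ := hnφψ.2 hφn
        have hex : ∃ w, E (ρ n) w ∧ ¬ Z w := ⟨y', hEy', hnZy'⟩
        have heq : ρ (n+1) = hex.choose := by rw [hρs, hf]; simp only [dif_pos hex]
        refine ⟨hreach.tail (by rw [hρs]; exact hfE _), ?_⟩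
        rw [heq]; exact hex.choose_spec.2
    obtain ⟨hreach, hnz⟩ := inv i le_rfl
    exact hnz ((hZ _ hreach).mpr (Or.inl hψi))
  · intro h
    apply h (SatAU E φ ψ)
    intro y _
    constructor
    · intro hy
      by_cases hψy : ψ y
      · exact Or.inl hψy
      · refine Or.inr ⟨?_, ?_⟩
        · -- φ y : take any infinite path from y
          set g : V → V := fun v => (hE v).choose with hg
          set ρ : ℕ → V := fun n => g^[n] y with hρ
          have hρs : ∀ n, ρ (n+1) = g (ρ n) := fun n => Function.iterate_succ_apply' g n y
          have hpath : IsPath E ρ := fun n => by rw [hρs]; exact (hE _).choose_spec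
          obtain ⟨i, hψi, hφi⟩ := hy ρ hpath rfl
          have hi : i ≠ 0 := by rintro rfl; exact hψy hψi
          have := hφi 0 (Nat.pos_of_ne_zero hi)
          exact this
        · intro y' hEy' ρ' hpath' hρ'0
          set ρ : ℕ → V := fun n => Nat.rec y (fun k _ => ρ' k) n with hρ
          have hpath : IsPath E ρ := by
            intro n
            cases n with
            | zero => show E y (ρ' 0); rw [hρ'0]; exact hEy'
            | succ n => exact hpath' n
          obtain ⟨i, hψi, hφi⟩ := hy ρ hpath rfl
          cases i with
          | zero => exact absurd hψi hψy
          | succ i =>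
            refine ⟨i, hψi, fun j hj => ?_⟩
            exact hφi (j+1) (Nat.succ_lt_succ hj)
    · rintro (hψy | ⟨hφy, hsucc⟩)
      · intro ρ _ hρ0
        exact ⟨0, by rw [hρ0]; exact hψy, fun j hj => absurd hj (Nat.not_lt_zero j)⟩
      · intro ρ hpath hρ0
        have h1 : SatAU E φ ψ (ρ 1) := hsucc (ρ 1) (hρ0 ▸ hpath 0)
        obtain ⟨i, hψi, hφi⟩ := h1 (fun n => ρ (n+1)) (fun n => hpath (n+1)) rfl
        refine ⟨i+1, hψi, fun j hj => ?_⟩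
        cases j with
        | zero => rw [hρ0]; exact hφy
        | succ j => exact hφi j (Nat.lt_of_succ_lt_succ hj)
end

section
/- In a Kripke structure K with total transition relation, a state x satisfies the QCTL formula E_{=1}F φ := EF φ ∧ ∀p.(EF(p ∧ φ) → AG(φ → p)), where p does not occur in φ nor in K's labelling, if and only if there is exactly one state reachable from x (under the reflexive-transitive closure of E) satisfying φ. -/
/-- `E_{=1}F φ := EF φ ∧ ∀p.(EF(p ∧ φ) → AG(φ → p))` holds at `x` iff exactly one
state reachable from `x` (via the reflexive-transitive closure of `E`) satisfies `φ`.
The fresh proposition `p` ranges over arbitrary labellings `P : V → Prop`, and `φ` is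
independent of `p` (it is a fixed state predicate). -/
theorem unique_reachable_iff {V : Type*} [Fintype V] (E : V → V → Prop)
    (hE : ∀ v, ∃ w, E v w) (φ : V → Prop) (x : V) :
    ((∃ y, Relation.ReflTransGen E x y ∧ φ y) ∧
      ∀ P : V → Prop,
        (∃ y, Relation.ReflTransGen E x y ∧ P y ∧ φ y) →
          ∀ y, Relation.ReflTransGen E x y → φ y → P y) ↔
    (∃! y, Relation.ReflTransGen E x y ∧ φ y) := by
  constructor
  · rintro ⟨⟨y, hy, hφy⟩, hP⟩
    exact ⟨y, ⟨hy, hφy⟩, fun z ⟨hz, hφz⟩ =>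
      hP (· = y) ⟨y, hy, rfl, hφy⟩ z hz hφz⟩
  · rintro ⟨y, ⟨hy, hφy⟩, huniq⟩
    refine ⟨⟨y, hy, hφy⟩, fun P ⟨w, hw, hPw, hφw⟩ z hz hφz => ?_⟩
    have : z = y := huniq z ⟨hz, hφz⟩
    have : w = y := huniq w ⟨hw, hφw⟩
    simp_all
end

section
/- In a Kripke structure K with total transition relation, a state x satisfies the QCTL formula E_{=1}X φ := EX φ ∧ ∀p.(EX(φ ∧ p) → AX(φ → p)), where p does not occur in φ nor in K's labelling, if and only if exactly one E-successor of x satisfies φ. -/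
/-- `E_{=1}X φ := EX φ ∧ ∀p.(EX(φ ∧ p) → AX(φ → p))` holds at `x` iff exactly one
`E`-successor of `x` satisfies `φ`. The fresh proposition `p` ranges over arbitrary
labellings `P : V → Prop`, and `φ` is independent of `p`. -/
theorem unique_successor_iff {V : Type*} [Fintype V] (E : V → V → Prop)
    (hE : ∀ v, ∃ w, E v w) (φ : V → Prop) (x : V) :
    ((∃ y, E x y ∧ φ y) ∧
      ∀ P : V → Prop, (∃ y, E x y ∧ φ y ∧ P y) → ∀ y, E x y → φ y → P y) ↔
    (∃! y, E x y ∧ φ y) := by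
  constructor
  · rintro ⟨⟨y, hy, hφ⟩, hP⟩
    exact ⟨y, ⟨hy, hφ⟩, fun z ⟨hz, hφz⟩ =>
      hP (· = y) ⟨y, hy, hφ, rfl⟩ z hz hφz⟩
  · rintro ⟨y, ⟨hy, hφ⟩, huniq⟩
    refine ⟨⟨y, hy, hφ⟩, fun P ⟨z, hz, hφz, hPz⟩ w hw hφw => ?_⟩
    rw [huniq w ⟨hw, hφw⟩, ← huniq z ⟨hz, hφz⟩]; exact hPz
end

section
/- In a Kripke structure K with total transition relation, for k ≥ 1 and a formula φ not containing the fresh propositions p_1,…,p_k, the state x satisfies E_{≥k}X φ := ∃p_1…∃p_k.( ⋀_{1≤i≤k} EX(p_i ∧ ⋀_{i'≠i} ¬p_{i'}) ∧ AX((⋁_{1≤i≤k} p_i) → φ) ) if and only if x has at least k distinct E-successors satisfying φ. -/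
/-! Witnesses of the mutually exclusive labels `p_i` are pairwise distinct successors, all
satisfying `φ` by the `AX` conjunct. Conversely, `k` distinct successors `y_i` satisfying `φ`
yield the labelling `p_i := {y_i}`. -/

open Function Finset

theorem injective_of_separates {ι V : Type*} {P : ι → V → Prop} {f : ι → V}
    (hP : ∀ i, P i (f i)) (hsep : ∀ i i', i' ≠ i → ¬ P i' (f i)) : Injective f := by
  intro i j hij
  by_contra hne
  exact hsep i j (Ne.symm hne) (hij ▸ hP j)

theorem exists_finset_of_separating_labels {ι V : Type*} [Fintype ι] {Q : V → Prop}
    {P : ι → V → Prop} (hsep : ∀ i, ∃ y, Q y ∧ P i y ∧ ∀ i', i' ≠ i → ¬ P i' y) :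
    ∃ s : Finset V, Fintype.card ι ≤ #s ∧ ∀ y ∈ s, Q y ∧ ∃ i, P i y := by
  choose f hQ hP hexcl using hsep
  refine ⟨univ.map ⟨f, injective_of_separates hP hexcl⟩, by simp, ?_⟩
  simp only [mem_map, mem_univ, true_and, Embedding.coeFn_mk]
  rintro _ ⟨i, rfl⟩
  exact ⟨hQ i, i, hP i⟩

theorem exists_separating_labels_of_card_le {ι V : Type*} [Fintype ι] (s : Finset V)
    (h : Fintype.card ι ≤ #s) :
    ∃ P : ι → V → Prop, (∀ i, ∃ y ∈ s, P i y ∧ ∀ i', i' ≠ i → ¬ P i' y) ∧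
      ∀ y, (∃ i, P i y) → y ∈ s := by
  obtain ⟨g⟩ := Embedding.nonempty_of_card_le (h.trans_eq (Fintype.card_coe s).symm)
  refine ⟨fun i y => y = g i, fun i => ⟨g i, (g i).2, rfl, fun i' hi' hi => ?_⟩, ?_⟩
  · exact hi' (g.injective (Subtype.ext hi.symm))
  · rintro _ ⟨i, rfl⟩
    exact (g i).2

theorem at_least_k_successors_iff_general {V : Type*}
    (E : V → V → Prop) (φ : V → Prop)
    (k : ℕ) (x : V) :
    (∃ P : Fin k → V → Prop,
      (∀ i, ∃ y, E x y ∧ P i y ∧ ∀ i', i' ≠ i → ¬ P i' y) ∧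
      (∀ y, E x y → (∃ i, P i y) → φ y)) ↔
    (∃ s : Finset V, k ≤ s.card ∧ ∀ y ∈ s, E x y ∧ φ y) := by
  constructor
  · rintro ⟨P, hEX, hAX⟩
    obtain ⟨s, hcard, hs⟩ := exists_finset_of_separating_labels hEX
    refine ⟨s, by simpa using hcard, fun y hy => ?_⟩
    obtain ⟨hxy, hPy⟩ := hs y hy
    exact ⟨hxy, hAX y hxy hPy⟩
  · rintro ⟨s, hcard, hs⟩
    obtain ⟨P, hsep, hPs⟩ :=
      exists_separating_labels_of_card_le (ι := Fin k) s (by simpa using hcard)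
    refine ⟨P, fun i => ?_, fun y _ hy => (hs y (hPs y hy)).2⟩
    obtain ⟨y, hy, hPy, hexcl⟩ := hsep i
    exact ⟨y, (hs y hy).1, hPy, hexcl⟩

/-- `E_{≥k}X φ := ∃p_1…∃p_k.( ⋀_i EX(p_i ∧ ⋀_{i'≠i} ¬p_{i'}) ∧ AX((⋁_i p_i) → φ) )`
holds at `x` iff `x` has at least `k` distinct `E`-successors satisfying `φ`.
The fresh propositions `p_1,…,p_k` range over arbitrary labellings, and `φ` is
independent of them. -/
theorem at_least_k_successors_iff {V : Type*} [Fintype V] [DecidableEq V]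
    (E : V → V → Prop) (hE : ∀ v, ∃ w, E v w) (φ : V → Prop)
    (k : ℕ) (hk : 1 ≤ k) (x : V) :
    (∃ P : Fin k → V → Prop,
      (∀ i, ∃ y, E x y ∧ P i y ∧ ∀ i', i' ≠ i → ¬ P i' y) ∧
      (∀ y, E x y → (∃ i, P i y) → φ y)) ↔
    (∃ s : Finset V, k ≤ s.card ∧ ∀ y ∈ s, E x y ∧ φ y) :=
  at_least_k_successors_iff_general E φ k x
end

section
/- For any QCTL formulas φ, ψ not containing the fresh propositions p_1, p_2, and for any blocks of quantifiers Q, Q', Q'' over propositions distinct from p_1, p_2, the QCTL formula Q ∃p_1 Q' ∀p_2 Q''.( uniq(p_1) ∧ (uniq(p_2) → Φ) ) is equivalent (holds at the same states of the same Kripke structures) to Q ∃p_1 Q' ∀p_2 Q''.( uniq(p_2) → (uniq(p_1) ∧ Φ) ), where uniq(p) := E_{=1}F p asserts that exactly one reachable state is labelled p. -/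
/-- Semantics of a block of propositional quantifiers (`true` = ∃, `false` = ∀):
each quantifier introduces a fresh atomic proposition, interpreted as a labelling
`V → Prop`; the body receives the list of labellings introduced by the block. -/
def SemBlock {V : Type*} : List Bool → (List (V → Prop) → Prop) → Prop
  | [], f => f []
  | b :: bs, f =>
      if b then ∃ P : V → Prop, SemBlock bs (fun Ls => f (P :: Ls))
      else ∀ P : V → Prop, SemBlock bs (fun Ls => f (P :: Ls))

/-- `uniq(p)` at `x`: exactly one state reachable from `x` is labelled `P`. -/
def Uniq {V : Type*} (E : V → V → Prop) (x : V) (P : V → Prop) : Prop :=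
  ∃! y, Relation.ReflTransGen E x y ∧ P y

theorem semBlock_mono {V : Type*} : ∀ (bs : List Bool) (f g : List (V → Prop) → Prop),
    (∀ Ls, f Ls → g Ls) → SemBlock bs f → SemBlock bs g
  | [], f, g, h, hf => h [] hf
  | true :: bs, f, g, h, hf => by
      obtain ⟨P, hP⟩ := hf
      exact ⟨P, semBlock_mono bs _ _ (fun Ls => h (P :: Ls)) hP⟩
  | false :: bs, f, g, h, hf => fun P =>
      semBlock_mono bs _ _ (fun Ls => h (P :: Ls)) (hf P)

theorem semBlock_elim {V : Type*} : ∀ (bs : List Bool) (f : List (V → Prop) → Prop)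
    (p : Prop), SemBlock bs f → (∀ Ls, f Ls → p) → p
  | [], f, p, hf, h => h [] hf
  | true :: bs, f, p, hf, h => by
      obtain ⟨P, hP⟩ := hf
      exact semBlock_elim bs _ p hP (fun Ls => h (P :: Ls))
  | false :: bs, f, p, hf, h =>
      semBlock_elim bs _ p (hf (fun _ => True)) (fun Ls => h ((fun _ => True) :: Ls))

/-- `Q ∃p₁ Q' ∀p₂ Q''.( uniq(p₁) ∧ (uniq(p₂) → Φ) )` is equivalent to
`Q ∃p₁ Q' ∀p₂ Q''.( uniq(p₂) → (uniq(p₁) ∧ Φ) )` at every state of every Kripke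
structure with total transition relation. The body `Φ` may depend on all the
quantified labellings. -/
theorem uniq_quantifier_swap {V : Type*} [Fintype V] (E : V → V → Prop)
    (hE : ∀ v, ∃ w, E v w) (x : V) (Q Q' Q'' : List Bool)
    (Φ : List (V → Prop) → (V → Prop) → List (V → Prop) → (V → Prop) →
          List (V → Prop) → V → Prop) :
    (SemBlock Q (fun as => ∃ P1 : V → Prop, SemBlock Q' (fun bs =>
        ∀ P2 : V → Prop, SemBlock Q'' (fun cs =>
          Uniq E x P1 ∧ (Uniq E x P2 → Φ as P1 bs P2 cs x))))) ↔
    (SemBlock Q (fun as => ∃ P1 : V → Prop, SemBlock Q' (fun bs =>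
        ∀ P2 : V → Prop, SemBlock Q'' (fun cs =>
          Uniq E x P2 → (Uniq E x P1 ∧ Φ as P1 bs P2 cs x))))) := by
  constructor
  · refine semBlock_mono Q _ _ (fun as ⟨P1, h⟩ => ⟨P1, semBlock_mono Q' _ _ (fun bs h2 P2 => semBlock_mono Q'' _ _ (fun cs ⟨h1, h3⟩ hu2 => ⟨h1, h3 hu2⟩) (h2 P2)) h⟩)
  · refine semBlock_mono Q _ _ (fun as ⟨P1, h⟩ => ⟨P1, semBlock_mono Q' _ _ (fun bs h2 P2 => ?_) h⟩)
    have hux : Uniq E x (fun y => y = x) :=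
      ⟨x, ⟨Relation.ReflTransGen.refl, rfl⟩, fun y hy => hy.2⟩
    have hU1 : Uniq E x P1 :=
      semBlock_elim Q'' _ _ (h2 (fun y => y = x)) (fun cs h3 => (h3 hux).1)
    exact semBlock_mono Q'' _ _ (fun cs h3 => ⟨hU1, fun hu2 => (h3 hu2).2⟩) (h2 P2)
end

section
/- Consider the Kripke structure V_{n,k} consisting of a root r with edges to the first state of each of n disjoint directed cycles of length k (states q_{i,1} → q_{i,2} → … → q_{i,k} → q_{i,1}), and self-loop-free otherwise, with n, k ≥ 1. Then there exists a set T of at most m states such that every state reachable from r can reach some state of T, if and only if m ≥ n. -/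
/-- The edge relation of the Kripke structure `V_{n,k}`: a root (`none`) with edges
to the first state of each of `n` disjoint directed cycles of length `k`
(states `q_{i,1} → q_{i,2} → … → q_{i,k} → q_{i,1}`), and no other edges. -/
def ResetEdge (n k : ℕ) (a b : Option (Fin n × Fin k)) : Prop :=
  (a = none ∧ ∃ i j, b = some (i, j) ∧ (j : ℕ) = 0) ∨
  (∃ i j j', a = some (i, j) ∧ b = some (i, j') ∧ (j' : ℕ) = ((j : ℕ) + 1) % k)

lemma reach_add (n k : ℕ) (hk : 0 < k) (i : Fin n) (j : Fin k) (t : ℕ) :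
    Relation.ReflTransGen (ResetEdge n k) (some (i, j))
      (some (i, ⟨((j : ℕ) + t) % k, Nat.mod_lt _ hk⟩)) := by
  induction t with
  | zero =>
    have : (⟨((j : ℕ) + 0) % k, Nat.mod_lt _ hk⟩ : Fin k) = j := by
      ext; simp [Nat.mod_eq_of_lt j.isLt]
    rw [this]
  | succ t ih =>
    refine ih.tail ?_
    right
    refine ⟨i, _, _, rfl, rfl, ?_⟩
    simp [Nat.mod_add_mod, Nat.add_assoc]

lemma reach_cycle (n k : ℕ) (hk : 0 < k) (i : Fin n) (j j' : Fin k) :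
    Relation.ReflTransGen (ResetEdge n k) (some (i, j)) (some (i, j')) := by
  have h := reach_add n k hk i j ((k - (j : ℕ)) + (j' : ℕ))
  have he : ((j : ℕ) + ((k - (j : ℕ)) + (j' : ℕ))) % k = (j' : ℕ) := by
    rw [← Nat.add_assoc, Nat.add_sub_cancel' (le_of_lt j.isLt)]
    simp [Nat.add_mod_left, Nat.mod_eq_of_lt j'.isLt]
  have : (⟨((j : ℕ) + ((k - (j : ℕ)) + (j' : ℕ))) % k, Nat.mod_lt _ hk⟩ : Fin k) = j' :=
    Fin.ext he
  rwa [this] at h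

lemma same_cycle (n k : ℕ) (i : Fin n) (j : Fin k) (y : Option (Fin n × Fin k))
    (h : Relation.ReflTransGen (ResetEdge n k) (some (i, j)) y) :
    ∃ j', y = some (i, j') := by
  induction h with
  | refl => exact ⟨j, rfl⟩
  | tail h e ih =>
    obtain ⟨j₁, rfl⟩ := ih
    rcases e with ⟨ha, _⟩ | ⟨i', j₂, j₃, ha, hb, _⟩
    · exact absurd ha (by simp)
    · obtain ⟨hi, hj⟩ := Prod.mk.injEq .. ▸ Option.some.injEq .. ▸ ha
      exact ⟨j₃, by rw [hb, ← hi]⟩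

/-- Reset property for `V_{n,k}` (`n, k ≥ 1`): there is a set `T` of at most `m`
states such that every state reachable from the root can reach some state of `T`,
iff `m ≥ n`. -/
theorem reset_property_iff (n k m : ℕ) (hn : 1 ≤ n) (hk : 1 ≤ k) :
    (∃ T : Finset (Option (Fin n × Fin k)), T.card ≤ m ∧
      ∀ y, Relation.ReflTransGen (ResetEdge n k) none y →
        ∃ t ∈ T, Relation.ReflTransGen (ResetEdge n k) y t) ↔ n ≤ m := by
  have hk0 : 0 < k := hk
  constructor
  · rintro ⟨T, hcard, hT⟩
    -- each cycle start is reachable from the root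
    have hreach : ∀ i : Fin n, Relation.ReflTransGen (ResetEdge n k) none
        (some (i, ⟨0, hk0⟩)) := by
      intro i
      exact Relation.ReflTransGen.single (Or.inl ⟨rfl, i, ⟨0, hk0⟩, rfl, rfl⟩)
    have hx : ∀ i : Fin n, ∃ j : Fin k, some (i, j) ∈ T := by
      intro i
      obtain ⟨t, htT, hre⟩ := hT _ (hreach i)
      obtain ⟨j', rfl⟩ := same_cycle n k i ⟨0, hk0⟩ t hre
      exact ⟨j', htT⟩
    choose f hf using hx
    have hinj : Function.Injective (fun i : Fin n => (some (i, f i) : Option (Fin n × Fin k))) := by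
      intro a b hab
      simpa using congrArg (fun o => o.map Prod.fst) hab
    calc n = (Finset.univ.image (fun i : Fin n => (some (i, f i) : Option (Fin n × Fin k)))).card := by
            rw [Finset.card_image_of_injective _ hinj, Finset.card_univ, Fintype.card_fin]
      _ ≤ T.card := Finset.card_le_card (by
            intro x hx
            simp only [Finset.mem_image, Finset.mem_univ, true_and] at hx
            obtain ⟨i, rfl⟩ := hx
            exact hf i)
      _ ≤ m := hcard
  · intro hm
    refine ⟨Finset.univ.image (fun i : Fin n => (some (i, ⟨0, hk0⟩) : Option (Fin n × Fin k))), ?_, ?_⟩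
    · calc (Finset.univ.image _).card ≤ Finset.univ.card := Finset.card_image_le
        _ = n := by simp
        _ ≤ m := hm
    · intro y _
      rcases y with _ | ⟨i, j⟩
      · refine ⟨some (⟨0, hn⟩, ⟨0, hk0⟩), by simp, ?_⟩
        exact Relation.ReflTransGen.single (Or.inl ⟨rfl, ⟨0, hn⟩, ⟨0, hk0⟩, rfl, rfl⟩)
      · exact ⟨some (i, ⟨0, hk0⟩), by simp, reach_cycle n k hk0 i j ⟨0, hk0⟩⟩
end
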